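/- arXiv:2107.13370 — 5 statements merged into one kernel-verified Lean document; each statement's English description precedes it below -/
import Mathlib

section
/- Let (λ, o) be one of the pairs (1,2),(2,2),(1,4),(2,4),(1,3),(3,3),(1,6). Let (r,a,b,s) ∈ ℤ⁴ with r > 0, a·b = r·s and gcd(r,a,b,s) = 1 (a primitive isotropic Mukai vector). Then for every ε > 0 there exists (r',a',b',s') ∈ ℤ⁴ with r' > 0, a'·b' = r'·s', gcd(r',a',b',s') = 1, gcd(r', a', (o/λ)·b', o·s') = o, and |a'/r' − a/r| < ε and |b'/r' − b/r| < ε. -/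
/-!
Both gcd conditions only depend on the shape of the vector, not on the slopes. Writing the
slopes as reduced fractions `x / α` and `y / β`, the vector `(αβ, xβ, αy, xy)` is isotropic,
and multiplying the Bézout identities for `(α, x)` and `(β, y)` exhibits its gcd as `1`. When
`α` and `β` are powers of `o` (divisible by `λ`), the same product identity, scaled by `o`,
shows that the twisted gcd is `o`. Fractions `x / o ^ n` with `x ≡ 1 mod o` are already in
lowest terms and are dense in `ℝ`, so both slopes can be approximated this way.
-/

lemma Int.gcd_gcd_gcd_eq_of_dvd_of_combination {g r a b s : ℤ} (c₁ c₂ c₃ c₄ : ℤ) (hg : 0 ≤ g)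
    (hr : g ∣ r) (ha : g ∣ a) (hb : g ∣ b) (hs : g ∣ s)
    (h : c₁ * r + c₂ * a + c₃ * b + c₄ * s = g) :
    (Int.gcd r (Int.gcd a (Int.gcd b s : ℤ) : ℤ) : ℤ) = g := by
  apply Int.dvd_antisymm (Int.natCast_nonneg _) hg
  · have habs := Int.gcd_dvd_right r (Int.gcd a (Int.gcd b s))
    have hbs := habs.trans (Int.gcd_dvd_right a (Int.gcd b s))
    rw [← h]
    refine dvd_add (dvd_add (dvd_add ?_ ?_) ?_) ?_ <;> apply Dvd.dvd.mul_left
    exacts [Int.gcd_dvd_left _ _, habs.trans (Int.gcd_dvd_left _ _),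
      hbs.trans (Int.gcd_dvd_left _ _), hbs.trans (Int.gcd_dvd_right _ _)]
  · exact Int.dvd_coe_gcd hr (Int.dvd_coe_gcd ha (Int.dvd_coe_gcd hb hs))

lemma Int.gcd_mul_mul_eq_one_of_isCoprime {α β x y : ℤ} (hx : IsCoprime α x)
    (hy : IsCoprime β y) :
    Int.gcd (α * β) (Int.gcd (x * β) (Int.gcd (α * y) (x * y) : ℤ) : ℤ) = 1 := by
  obtain ⟨u, v, huv⟩ := hx
  obtain ⟨u', v', huv'⟩ := hy
  rw [← Nat.cast_inj (R := ℤ), Nat.cast_one]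
  exact Int.gcd_gcd_gcd_eq_of_dvd_of_combination (u * u') (v * u') (u * v') (v * v')
    zero_le_one (one_dvd _) (one_dvd _) (one_dvd _) (one_dvd _)
    (by linear_combination (u' * β + v' * y) * huv + huv')

lemma Int.gcd_twisted_pow_mul_pow_eq_self {lam o x y : ℤ} {k m : ℕ} (hlam : lam ∣ o) (ho : 0 < o)
    (hx : IsCoprime (o ^ (k + 1)) x) (hy : IsCoprime (o ^ (m + 1)) y) :
    (Int.gcd (o ^ (k + 1) * o ^ (m + 1)) (Int.gcd (x * o ^ (m + 1))
      (Int.gcd (o / lam * (o ^ (k + 1) * y)) (o * (x * y)) : ℤ) : ℤ) : ℤ) = o := by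
  obtain ⟨u, v, huv⟩ := hx
  obtain ⟨u', v', huv'⟩ := hy
  obtain ⟨d, rfl⟩ := hlam
  have hlam0 : lam ≠ 0 := left_ne_zero_of_mul ho.ne'
  rw [Int.mul_ediv_cancel_left _ hlam0]
  apply Int.gcd_gcd_gcd_eq_of_dvd_of_combination (lam * d * u * u') (lam * d * v * u')
    (lam * u * v') (v * v') ho.le
  · exact Dvd.intro (lam * d * (lam * d) ^ k * (lam * d) ^ m) (by ring)
  · exact Dvd.intro (x * (lam * d) ^ m) (by ring)
  · exact Dvd.intro (d * (lam * d) ^ k * y) (by ring)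
  · exact dvd_mul_right _ _
  · linear_combination (lam * d) * ((u' * (lam * d) ^ (m + 1) + v' * y) * huv + huv')

lemma exists_isCoprime_pow_div_near {M : ℤ} (hM : 1 < M) (t : ℝ) {ε : ℝ} (hε : 0 < ε) :
    ∃ n : ℕ, ∃ x : ℤ, IsCoprime (M ^ (n + 1)) x ∧ |(x : ℝ) / (M : ℝ) ^ (n + 1) - t| < ε := by
  have hM' : (1 : ℝ) < M := by exact_mod_cast hM
  have hM0 : (0 : ℝ) < M := by linarith
  obtain ⟨n, hn⟩ := pow_unbounded_of_one_lt ε⁻¹ hM'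
  set D : ℝ := (M : ℝ) ^ (n + 1)
  have hD : 0 < D := by positivity
  set f := ⌊(t * D - 1) / M⌋
  have hf₁ : (f : ℝ) * M ≤ t * D - 1 := (le_div_iff₀ hM0).mp (Int.floor_le _)
  have hf₂ : t * D - 1 < (f + 1) * M := (div_lt_iff₀ hM0).mp (Int.lt_floor_add_one _)
  refine ⟨n, 1 + M * f, IsCoprime.pow_left ⟨-f, 1, by ring⟩, ?_⟩
  have hclose : |((1 + M * f : ℤ) : ℝ) - t * D| < M := by
    rw [abs_lt]; push_cast; constructor <;> linarith
  calc |((1 + M * f : ℤ) : ℝ) / D - t|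
      = |((1 + M * f : ℤ) : ℝ) - t * D| / D := by
        rw [← abs_of_pos hD, ← abs_div, abs_of_pos hD, sub_div, mul_div_cancel_right₀ _ hD.ne']
    _ < M / D := div_lt_div_of_pos_right hclose hD
    _ = ((M : ℝ) ^ n)⁻¹ := by simp only [D]; rw [pow_succ', div_mul_cancel_left₀ hM0.ne']
    _ < ε := inv_lt_of_inv_lt₀ hε hn

theorem stmt_2_general (lam o : ℤ)
    (h : (lam, o) = (1, 2) ∨ (lam, o) = (2, 2) ∨ (lam, o) = (1, 4) ∨ (lam, o) = (2, 4) ∨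
      (lam, o) = (1, 3) ∨ (lam, o) = (3, 3) ∨ (lam, o) = (1, 6))
    (r a b : ℤ) (ε : ℝ) (hε : 0 < ε) :
    ∃ r' a' b' s' : ℤ, 0 < r' ∧ a' * b' = r' * s' ∧
      Int.gcd r' (Int.gcd a' (Int.gcd b' s' : ℤ) : ℤ) = 1 ∧
      (Int.gcd r' (Int.gcd a' (Int.gcd (o / lam * b') (o * s') : ℤ) : ℤ) : ℤ) = o ∧
      |(a' : ℝ) / (r' : ℝ) - (a : ℝ) / (r : ℝ)| < ε ∧
      |(b' : ℝ) / (r' : ℝ) - (b : ℝ) / (r : ℝ)| < ε := by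
  obtain ⟨hlam, ho⟩ : lam ∣ o ∧ 1 < o := by
    rcases h with h | h | h | h | h | h | h <;> obtain ⟨rfl, rfl⟩ := Prod.mk.inj h <;> norm_num
  obtain ⟨k, x, hx, hxa⟩ := exists_isCoprime_pow_div_near ho (a / r) hε
  obtain ⟨m, y, hy, hyb⟩ := exists_isCoprime_pow_div_near ho (b / r) hε
  refine ⟨o ^ (k + 1) * o ^ (m + 1), x * o ^ (m + 1), o ^ (k + 1) * y, x * y, by positivity,
    by ring, Int.gcd_mul_mul_eq_one_of_isCoprime hx hy,
    Int.gcd_twisted_pow_mul_pow_eq_self hlam (by omega) hx hy, ?_, ?_⟩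
  · push_cast
    rwa [mul_div_mul_right _ _ (by positivity)]
  · push_cast
    rwa [mul_div_mul_left _ _ (by positivity)]

/-- Every primitive isotropic Mukai vector on a bielliptic surface (with invariants
`(lam, o)` among the seven possibilities) is arbitrarily close, in the sense of slopes,
to a primitive isotropic Mukai vector `v₀` with `l(v₀) = o`. -/
theorem stmt_2 (lam o : ℤ)
    (h : (lam, o) = (1, 2) ∨ (lam, o) = (2, 2) ∨ (lam, o) = (1, 4) ∨ (lam, o) = (2, 4) ∨
      (lam, o) = (1, 3) ∨ (lam, o) = (3, 3) ∨ (lam, o) = (1, 6))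
    (r a b s : ℤ) (hr : 0 < r) (hiso : a * b = r * s)
    (hprim : Int.gcd r (Int.gcd a (Int.gcd b s : ℤ) : ℤ) = 1)
    (ε : ℝ) (hε : 0 < ε) :
    ∃ r' a' b' s' : ℤ, 0 < r' ∧ a' * b' = r' * s' ∧
      Int.gcd r' (Int.gcd a' (Int.gcd b' s' : ℤ) : ℤ) = 1 ∧
      (Int.gcd r' (Int.gcd a' (Int.gcd (o / lam * b') (o * s') : ℤ) : ℤ) : ℤ) = o ∧
      |(a' : ℝ) / (r' : ℝ) - (a : ℝ) / (r : ℝ)| < ε ∧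
      |(b' : ℝ) / (r' : ℝ) - (b : ℝ) / (r : ℝ)| < ε :=
  stmt_2_general lam o h r a b ε hε
end

section
/- Let V be a two-dimensional real vector space with a symmetric bilinear form B such that B(y,y) < 0 for some y ∈ V. If u, w ∈ V are linearly independent with B(u,u) ≥ 0 and B(w,w) ≥ 0, then B(u,w)² > B(u,u)·B(w,w). In particular, if v ∈ V satisfies B(v,v) > 0 and u ≠ 0 satisfies B(u,u) = 0, then B(v,u) ≠ 0. -/
/-!
If `u, w` are independent with `B u u, B w w ≥ 0` and `B u w ^ 2 ≤ B u u * B w w`, then the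
Gram matrix of `B` in the basis `u, w` is positive semidefinite, so `B` would be nonnegative on
all of `V`, contradicting the existence of a vector of negative square. For the second claim, a
vector `u` dependent on `v` is a nonzero multiple `a • v`, so `B v u = a * B v v ≠ 0`.
-/

open Module Submodule
open LinearMap (BilinForm)

theorem sq_mul_add_two_mul_mul_add_sq_mul_nonneg {p q r : ℝ} (hp : 0 ≤ p) (hr : 0 ≤ r)
    (hq : q ^ 2 ≤ p * r) (a c : ℝ) : 0 ≤ a ^ 2 * p + 2 * a * c * q + c ^ 2 * r := by
  rcases hp.eq_or_lt with rfl | hp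
  · have hq0 : q = 0 := by nlinarith [sq_nonneg q]
    simp only [hq0, mul_zero, add_zero, zero_add]
    positivity
  · -- completing the square: `p * (a²p + 2acq + c²r) = (ap + cq)² + c²(pr - q²)`
    refine nonneg_of_mul_nonneg_right ?_ hp
    nlinarith [sq_nonneg (a * p + c * q), mul_nonneg (sq_nonneg c) (sub_nonneg.2 hq)]

namespace LinearMap.BilinForm

section CommRing

variable {R M : Type*} [CommRing R] [AddCommGroup M] [Module R M] {B : BilinForm R M}

theorem IsSymm.apply_smul_add_smul_self (hB : B.IsSymm) (a c : R) (u w : M) :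
    B (a • u + c • w) (a • u + c • w) = a ^ 2 * B u u + 2 * a * c * B u w + c ^ 2 * B w w := by
  simp only [map_add, map_smul, LinearMap.add_apply, LinearMap.smul_apply, smul_eq_mul,
    hB.eq w u]
  ring

end CommRing

variable {V : Type*} [AddCommGroup V] [Module ℝ V] {B : BilinForm ℝ V} {u v w y : V}

theorem IsSymm.apply_self_nonneg_of_mem_span_pair (hB : B.IsSymm) (hu : 0 ≤ B u u)
    (hw : 0 ≤ B w w) (huw : B u w ^ 2 ≤ B u u * B w w) (hy : y ∈ span ℝ {u, w}) :
    0 ≤ B y y := by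
  obtain ⟨a, c, rfl⟩ := mem_span_pair.1 hy
  rw [hB.apply_smul_add_smul_self]
  exact sq_mul_add_two_mul_mul_add_sq_mul_nonneg hu hw huw a c

theorem IsSymm.mul_lt_sq_of_linearIndependent (hB : B.IsSymm) (hdim : finrank ℝ V = 2)
    (hneg : ∃ y, B y y < 0) (hli : LinearIndependent ℝ ![u, w]) (hu : 0 ≤ B u u)
    (hw : 0 ≤ B w w) : B u u * B w w < B u w ^ 2 := by
  by_contra! huw
  obtain ⟨y, hy⟩ := hneg
  have hspan : span ℝ {u, w} = ⊤ := by
    rw [← Matrix.range_cons_cons_empty u w ![]]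
    exact hli.span_eq_top_of_card_eq_finrank (by simp [hdim])
  exact hy.not_ge (hB.apply_self_nonneg_of_mem_span_pair hu hw huw (hspan ▸ mem_top))

theorem IsSymm.apply_ne_zero_of_apply_self_eq_zero (hB : B.IsSymm) (hdim : finrank ℝ V = 2)
    (hneg : ∃ y, B y y < 0) (hv : 0 < B v v) (hu : u ≠ 0) (huu : B u u = 0) : B v u ≠ 0 := by
  intro hvu
  have hv0 : v ≠ 0 := by rintro rfl; simp at hv
  by_cases hli : LinearIndependent ℝ ![v, u]
  · have := hB.mul_lt_sq_of_linearIndependent hdim hneg hli hv.le huu.ge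
    simp [huu, hvu] at this
  · obtain ⟨a, rfl⟩ := not_forall_not.1 (mt (LinearIndependent.pair_iff' hv0).2 hli)
    have ha : a ≠ 0 := by rintro rfl; simp at hu
    simp only [map_smul, smul_eq_mul, mul_eq_zero] at hvu
    exact hvu.elim ha hv.ne'

end LinearMap.BilinForm

/-- Reverse Cauchy–Schwarz on a two-dimensional real vector space with a symmetric
bilinear form taking a negative value: linearly independent vectors of nonnegative square
satisfy `B(u,w)² > B(u,u)·B(w,w)`; in particular a vector of positive square pairs
nontrivially with every nonzero isotropic vector. -/
theorem stmt_4 (V : Type*) [AddCommGroup V] [Module ℝ V]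
    (hdim : Module.finrank ℝ V = 2)
    (B : V →ₗ[ℝ] V →ₗ[ℝ] ℝ) (hsymm : ∀ x y : V, B x y = B y x)
    (hneg : ∃ y : V, B y y < 0) :
    (∀ u w : V, LinearIndependent ℝ ![u, w] → 0 ≤ B u u → 0 ≤ B w w →
      B u u * B w w < (B u w) ^ 2) ∧
    (∀ v u : V, 0 < B v v → u ≠ 0 → B u u = 0 → B v u ≠ 0) := by
  have hB : LinearMap.BilinForm.IsSymm B := ⟨hsymm⟩
  exact ⟨fun _ _ hli hu hw ↦ hB.mul_lt_sq_of_linearIndependent hdim hneg hli hu hw,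
    fun _ _ hv hu huu ↦ hB.apply_ne_zero_of_apply_self_eq_zero hdim hneg hv hu huu⟩
end

section
/- Let H be a hyperbolic rank-two lattice, v ∈ H with v² > 0, and u ∈ H primitive with u² = 0 and ⟨v,u⟩ > 0. Then there do not exist a, b ∈ H with u = a + b, a² ≥ 0, b² ≥ 0, ⟨v,a⟩ > 0 and ⟨v,b⟩ > 0. -/
/-- A hyperbolic rank-two lattice: a free `ℤ`-module of rank two with an integral
symmetric bilinear form whose real extension has signature `(1,1)`; equivalently
(in rank two) the form takes both a positive and a negative value on the lattice. -/
def IsHyperbolicRankTwoLattice (H : Type*) [AddCommGroup H] [Module ℤ H]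
    (B : H →ₗ[ℤ] H →ₗ[ℤ] ℤ) : Prop :=
  Module.Free ℤ H ∧ Module.finrank ℤ H = 2 ∧ (∀ x y : H, B x y = B y x) ∧
    (∃ x : H, 0 < B x x) ∧ (∃ y : H, B y y < 0)

/-- `x` is primitive: `x = n • y` implies `n = ±1`. -/
def IsPrimitiveVec {H : Type*} [AddCommGroup H] [Module ℤ H] (x : H) : Prop :=
  ∀ (n : ℤ) (y : H), x = n • y → n = 1 ∨ n = -1


/-!
Put `p = ⟨v,a⟩ > 0`, `q = ⟨v,b⟩ > 0` and `S = q a - p b`, so that `⟨v,S⟩ = 0`. Expanding with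
`a² + 2⟨a,b⟩ + b² = u² = 0` gives `S² = q² a² + p q (a² + b²) + p² b² ≥ 0`. In rank two with
signature `(1,1)` the orthogonal complement of a positive vector is negative definite, so `S = 0`,
i.e. `(p + q) a = p u`. Primitivity of `u` then forces `p + q ∣ p`, impossible as `0 < p < p + q`.
-/

theorem LinearMap.BilinForm.apply_self_neg_of_apply_eq_zero {R M : Type*} [CommRing R]
    [LinearOrder R] [IsStrictOrderedRing R] [AddCommGroup M] [Module R M] [Module.Finite R M]
    [Module.IsTorsionFree R M] (hrank : Module.finrank R M ≤ 2) {B : LinearMap.BilinForm R M}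
    (hB : B.IsSymm) {v x y : M} (hv : 0 < B v v) (hy : B y y < 0) (hvx : B v x = 0)
    (hx : x ≠ 0) : B x x < 0 := by
  by_contra! hxx
  have hdep : ¬ LinearIndependent R ![v, x, y] := fun h => by
    simpa using h.fintype_card_le_finrank.trans hrank
  obtain ⟨g, hg, i, hi⟩ := Fintype.not_linearIndependent_iff.mp hdep
  simp only [Fin.sum_univ_three, Matrix.cons_val_zero, Matrix.cons_val_one,
    Matrix.cons_val_two, Matrix.tail_cons, Matrix.head_cons] at hg
  have hxv : B x v = 0 := by rw [hB.eq, hvx]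
  -- A relation `g₀ v + g₁ x + g₂ y = 0` with `g₂ ≠ 0` would give `g₂² y² = (g₀ v + g₁ x)² ≥ 0`.
  by_cases hg2 : g 2 = 0
  · simp only [hg2, zero_smul, add_zero] at hg
    have hg0 : g 0 = 0 := by
      have := congrArg (B v) hg
      simp only [map_add, map_smul, hvx, smul_eq_mul, mul_zero, add_zero, map_zero] at this
      exact (mul_eq_zero.mp this).resolve_right hv.ne'
    simp only [hg0, zero_smul, zero_add, smul_eq_zero, hx, or_false] at hg
    fin_cases i <;> simp_all
  · have hyw : g 2 • y = -(g 0 • v + g 1 • x) := eq_neg_of_add_eq_zero_right hg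
    have hsq := congrArg (fun w => B w w) hyw
    simp only [map_add, map_neg, map_smul, LinearMap.add_apply, LinearMap.neg_apply,
      LinearMap.smul_apply, smul_eq_mul, hvx, hxv] at hsq
    nlinarith [mul_pos (mul_self_pos.mpr hg2) (neg_pos.mpr hy), mul_self_nonneg (g 0),
      mul_self_nonneg (g 1), mul_nonneg (mul_self_nonneg (g 1)) hxx,
      mul_nonneg (mul_self_nonneg (g 0)) hv.le]

theorem IsPrimitiveVec.dvd_of_zsmul_eq {H : Type*} [AddCommGroup H] [Module ℤ H]
    [IsAddTorsionFree H] {u a : H} (hu : IsPrimitiveVec u) {k m : ℤ} (hk : k ≠ 0)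
    (h : k • a = m • u) : k ∣ m := by
  obtain ⟨g, k', m', hg, hcop, rfl, rfl⟩ := Int.exists_gcd_one' (Int.gcd_pos_of_ne_zero_left m hk)
  have h' : k' • a = m' • u := by
    rw [← zsmul_right_inj (Int.natCast_ne_zero.mpr hg.ne'), ← mul_zsmul, ← mul_zsmul,
      mul_comm (g : ℤ), mul_comm (g : ℤ), h]
  obtain ⟨x, y, hxy⟩ := Int.isCoprime_iff_gcd_eq_one.mpr hcop
  have hu' : u = k' • (x • u + y • a) := by
    calc u = (x * k' + y * m') • u := by rw [hxy, one_zsmul]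
      _ = k' • (x • u + y • a) := by
        rw [add_zsmul, mul_zsmul', mul_zsmul, ← h', zsmul_add, zsmul_comm a y k']
  rcases hu k' _ hu' with rfl | rfl <;> simp

theorem stmt_7_general (H : Type*) [AddCommGroup H] [Module ℤ H]
    (B : H →ₗ[ℤ] H →ₗ[ℤ] ℤ) (hH : IsHyperbolicRankTwoLattice H B)
    (v u : H) (hv : 0 < B v v) (hu : B u u = 0)
    (hprim : IsPrimitiveVec u) :
    ¬ ∃ a b : H, u = a + b ∧ 0 ≤ B a a ∧ 0 ≤ B b b ∧ 0 < B v a ∧ 0 < B v b := by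
  obtain ⟨hfree, hrank, hsym, -, y, hy⟩ := hH
  have : Module.Finite ℤ H := Module.finite_of_finrank_pos (by omega)
  have : IsAddTorsionFree H := .of_isTorsionFree ℤ H
  rintro ⟨a, b, rfl, ha, hb, hva, hvb⟩
  set p := B v a
  set q := B v b
  set S := q • a - p • b
  have hvS : B v S = 0 := by
    simp only [S, map_sub, map_zsmul, smul_eq_mul]
    ring
  have hSS : B S S = q ^ 2 * B a a + p * q * (B a a + B b b) + p ^ 2 * B b b := by
    simp only [map_add, LinearMap.add_apply, hsym b a] at hu
    simp only [S, map_sub, map_zsmul, LinearMap.sub_apply, LinearMap.smul_apply, smul_eq_mul,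
      hsym b a]
    linear_combination (-(p * q)) * hu
  have hSS_nonneg : 0 ≤ B S S := by
    rw [hSS]
    have := mul_pos hva hvb
    positivity
  have hS : S = 0 := by
    by_contra hS
    exact (LinearMap.BilinForm.apply_self_neg_of_apply_eq_zero hrank.le
      (LinearMap.BilinForm.isSymm_def.mpr hsym) hv hy hvS hS).not_ge hSS_nonneg
  have hpq : (p + q) • a = p • (a + b) := by
    rw [sub_eq_zero] at hS
    rw [add_zsmul, zsmul_add, hS]
  have hdvd : p + q ∣ p := hprim.dvd_of_zsmul_eq (by omega) hpq
  exact absurd (Int.le_of_dvd hva hdvd) (by omega)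

/-- A primitive isotropic class `u` with `⟨v,u⟩ > 0` cannot be decomposed as a sum of two
classes of the positive cone: it spans an extremal ray. -/
theorem stmt_7 (H : Type*) [AddCommGroup H] [Module ℤ H]
    (B : H →ₗ[ℤ] H →ₗ[ℤ] ℤ) (hH : IsHyperbolicRankTwoLattice H B)
    (v u : H) (hv : 0 < B v v) (hu : B u u = 0)
    (hprim : IsPrimitiveVec u) (hvu : 0 < B v u) :
    ¬ ∃ a b : H, u = a + b ∧ 0 ≤ B a a ∧ 0 ≤ B b b ∧ 0 < B v a ∧ 0 < B v b :=
  stmt_7_general H B hH v u hv hu hprim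
end

section
/- Let o ≥ 2, k ≥ 1, b₁ ≥ 1, b₂ ≥ 1 be integers, and let l₁, l₂ be positive divisors of o such that l₁·l₂ divides o·k. Then ⌊b₁l₁/o⌋ + ⌊b₂l₂/o⌋ ≤ b₁·b₂·k, with equality if and only if, up to exchanging the pairs (b₁,l₁) and (b₂,l₂), one of the following holds: (i) o = 2, k = 2, b₁ = b₂ = 1 and l₁ = l₂ = 2; (ii) o = 2, k = 1, (b₁,l₁) = (2,1) and (b₂,l₂) = (1,2); (iii) k = 1, (b₁,l₁) = (1,1) and l₂ = o with b₂ arbitrary. -/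
/-!
A positive divisor `l` of `o` is either `o` itself, where `⌊b l / o⌋ = b`, or at most `o / 2`, where
`⌊b l / o⌋ ≤ ⌊b / 2⌋`. If both `lᵢ` are proper divisors, the left side is at most
`⌊b₁ / 2⌋ + ⌊b₂ / 2⌋ < b₁ b₂ ≤ b₁ b₂ k`. If `l₁ = l₂ = o`, then `o ∣ k`, so `k ≥ 2` and
`b₁ + b₂ ≤ 2 b₁ b₂ ≤ b₁ b₂ k`, with equality only for `b₁ = b₂ = 1` and `k = o = 2`. If only
`l₁ = o`, then `l₂ ∣ k` and `b₁ + ⌊b₂ l₂ / o⌋ ≤ b₁ b₂`; equality forces `k = l₂ = 1` and either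
`b₂ = 1`, or `b₁ = 1`, `b₂ = 2` and `o = 2`.
-/

namespace BiellipticWall

lemma eq_or_two_mul_le_of_dvd {m n : ℕ} (hn : 0 < n) (h : m ∣ n) : m = n ∨ 2 * m ≤ n := by
  obtain ⟨c, rfl⟩ := h
  rcases c with _ | _ | c
  · omega
  · simp
  · right; nlinarith

lemma two_mul_mul_div_le {a m n : ℕ} (hm : 0 < m) (h : 2 * m ≤ n) : 2 * (a * m / n) ≤ a := by
  have : a * m / n ≤ a / 2 := calc
    a * m / n ≤ a * m / (2 * m) := Nat.div_le_div_left h (by omega)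
    _ = a / 2 := by rw [mul_comm 2 m, ← Nat.div_div_eq_div_mul, Nat.mul_div_cancel _ hm]
  omega

def IsEqualityCase (o k b₁ b₂ l₁ l₂ : ℕ) : Prop :=
  (o = 2 ∧ k = 2 ∧ b₁ = 1 ∧ b₂ = 1 ∧ l₁ = 2 ∧ l₂ = 2) ∨
  (o = 2 ∧ k = 1 ∧ b₁ = 2 ∧ l₁ = 1 ∧ b₂ = 1 ∧ l₂ = 2) ∨
  (o = 2 ∧ k = 1 ∧ b₂ = 2 ∧ l₂ = 1 ∧ b₁ = 1 ∧ l₁ = 2) ∨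
  (k = 1 ∧ b₁ = 1 ∧ l₁ = 1 ∧ l₂ = o) ∨
  (k = 1 ∧ b₂ = 1 ∧ l₂ = 1 ∧ l₁ = o)

variable {o k b₁ b₂ l₁ l₂ : ℕ}

lemma IsEqualityCase.swap (h : IsEqualityCase o k b₁ b₂ l₁ l₂) :
    IsEqualityCase o k b₂ b₁ l₂ l₁ := by
  rcases h with ⟨ho, hk, hb₁, hb₂, hl₁, hl₂⟩ | h | h | h | h
  · exact Or.inl ⟨ho, hk, hb₂, hb₁, hl₂, hl₁⟩
  · exact Or.inr (Or.inr (Or.inl h))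
  · exact Or.inr (Or.inl h)
  · exact Or.inr (Or.inr (Or.inr (Or.inr h)))
  · exact Or.inr (Or.inr (Or.inr (Or.inl h)))

lemma IsEqualityCase.floor_sum_eq (ho : 2 ≤ o) (h : IsEqualityCase o k b₁ b₂ l₁ l₂) :
    b₁ * l₁ / o + b₂ * l₂ / o = b₁ * b₂ * k := by
  have h₀ : 1 / o = 0 := Nat.div_eq_of_lt (by omega)
  have h₁ : ∀ b, b * o / o = b := fun b => Nat.mul_div_cancel b (by omega)
  rcases h with ⟨rfl, rfl, rfl, rfl, rfl, rfl⟩ | ⟨rfl, rfl, rfl, rfl, rfl, rfl⟩ |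
    ⟨rfl, rfl, rfl, rfl, rfl, rfl⟩ | ⟨rfl, rfl, rfl, rfl⟩ | ⟨rfl, rfl, rfl, rfl⟩ <;>
    simp [h₀, h₁]

section Arithmetic

variable {q q₁ q₂ : ℕ}

lemma add_lt_mul_of_two_mul_le (hb₁ : 1 ≤ b₁) (hb₂ : 1 ≤ b₂)
    (hq₁ : 2 * q₁ ≤ b₁) (hq₂ : 2 * q₂ ≤ b₂) : q₁ + q₂ < b₁ * b₂ := by
  have : b₁ + b₂ ≤ b₁ * b₂ + 1 := by nlinarith
  have : b₁ ≤ b₁ * b₂ := Nat.le_mul_of_pos_right b₁ hb₂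
  omega

lemma add_le_mul_of_two_mul_le (hb₁ : 1 ≤ b₁) (hb₂ : 1 ≤ b₂) (hq : 2 * q ≤ b₂) :
    b₁ + q ≤ b₁ * b₂ := by
  obtain ⟨c, rfl⟩ := Nat.exists_eq_add_of_le hb₂
  rw [mul_add, mul_one]
  nlinarith

lemma eq_of_add_eq_mul_of_two_mul_le (hb₁ : 1 ≤ b₁) (hb₂ : 1 ≤ b₂) (hq : 2 * q ≤ b₂)
    (h : b₁ + q = b₁ * b₂) : (b₂ = 1 ∧ q = 0) ∨ (b₁ = 1 ∧ b₂ = 2 ∧ q = 1) := by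
  rcases Nat.lt_or_ge b₂ 2 with h₂ | h₂
  · left; constructor <;> nlinarith
  · right
    obtain rfl : b₁ = 1 := by nlinarith
    omega

lemma add_le_mul_mul (hb₁ : 1 ≤ b₁) (hb₂ : 1 ≤ b₂) (hk : 2 ≤ k) : b₁ + b₂ ≤ b₁ * b₂ * k := by
  have : b₁ ≤ b₁ * b₂ := Nat.le_mul_of_pos_right b₁ hb₂
  have : b₂ ≤ b₁ * b₂ := Nat.le_mul_of_pos_left b₂ hb₁
  have : b₁ * b₂ * 2 ≤ b₁ * b₂ * k := Nat.mul_le_mul_left _ hk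
  omega

lemma eq_of_add_eq_mul_mul (hb₁ : 1 ≤ b₁) (hb₂ : 1 ≤ b₂) (hk : 2 ≤ k)
    (h : b₁ + b₂ = b₁ * b₂ * k) : b₁ = 1 ∧ b₂ = 1 ∧ k = 2 := by
  have : b₁ ≤ b₁ * b₂ := Nat.le_mul_of_pos_right b₁ hb₂
  have : b₂ ≤ b₁ * b₂ := Nat.le_mul_of_pos_left b₂ hb₁
  have : b₁ * b₂ * 2 ≤ b₁ * b₂ * k := Nat.mul_le_mul_left _ hk
  refine ⟨?_, ?_, ?_⟩ <;> nlinarith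

end Arithmetic

lemma floor_sum_of_eq_of_eq (ho : 2 ≤ o) (hk : 1 ≤ k) (hb₁ : 1 ≤ b₁) (hb₂ : 1 ≤ b₂)
    (h₁ : l₁ = o) (h₂ : l₂ = o) (hdvd : l₁ * l₂ ∣ o * k) :
    b₁ * l₁ / o + b₂ * l₂ / o ≤ b₁ * b₂ * k ∧
      (b₁ * l₁ / o + b₂ * l₂ / o = b₁ * b₂ * k → IsEqualityCase o k b₁ b₂ l₁ l₂) := by
  subst l₁ l₂
  have hok : o ∣ k := Nat.dvd_of_mul_dvd_mul_left (by omega) hdvd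
  have hko : o ≤ k := Nat.le_of_dvd (by omega) hok
  simp only [Nat.mul_div_cancel _ (show 0 < o by omega)]
  refine ⟨add_le_mul_mul hb₁ hb₂ (by omega), fun h => ?_⟩
  obtain ⟨rfl, rfl, rfl⟩ := eq_of_add_eq_mul_mul hb₁ hb₂ (by omega) h
  obtain rfl : o = 2 := by omega
  exact Or.inl ⟨rfl, rfl, rfl, rfl, rfl, rfl⟩

lemma floor_sum_of_eq_of_two_mul_le (ho : 2 ≤ o) (hk : 1 ≤ k) (hb₁ : 1 ≤ b₁) (hb₂ : 1 ≤ b₂)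
    (hl₂ : 0 < l₂) (h₁ : l₁ = o) (h₂ : 2 * l₂ ≤ o) (hdvd : l₁ * l₂ ∣ o * k) :
    b₁ * l₁ / o + b₂ * l₂ / o ≤ b₁ * b₂ * k ∧
      (b₁ * l₁ / o + b₂ * l₂ / o = b₁ * b₂ * k → IsEqualityCase o k b₁ b₂ l₁ l₂) := by
  subst l₁
  have hlk : l₂ ∣ k := Nat.dvd_of_mul_dvd_mul_left (by omega) hdvd
  have hq := two_mul_mul_div_le (a := b₂) hl₂ h₂
  have hle := add_le_mul_of_two_mul_le hb₁ hb₂ hq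
  have hmono : b₁ * b₂ ≤ b₁ * b₂ * k := Nat.le_mul_of_pos_right _ hk
  rw [Nat.mul_div_cancel _ (show 0 < o by omega)]
  refine ⟨hle.trans hmono, fun h => ?_⟩
  obtain rfl : k = 1 := by
    by_contra hk₁
    have : b₁ * b₂ * 2 ≤ b₁ * b₂ * k := Nat.mul_le_mul_left _ (by omega)
    have : 1 ≤ b₁ * b₂ := Nat.mul_le_mul hb₁ hb₂
    omega
  obtain rfl : l₂ = 1 := Nat.dvd_one.mp hlk
  simp only [mul_one] at h hq
  rcases eq_of_add_eq_mul_of_two_mul_le hb₁ hb₂ hq h with ⟨rfl, _⟩ | ⟨rfl, rfl, hq₁⟩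
  · exact Or.inr (Or.inr (Or.inr (Or.inr ⟨rfl, rfl, rfl, rfl⟩)))
  · obtain rfl : o = 2 := by
      have := (Nat.one_le_div_iff (show 0 < o by omega)).mp hq₁.ge
      omega
    exact Or.inr (Or.inr (Or.inl ⟨rfl, rfl, rfl, rfl, rfl, rfl⟩))

lemma floor_sum_lt_of_two_mul_le (hk : 1 ≤ k) (hb₁ : 1 ≤ b₁) (hb₂ : 1 ≤ b₂)
    (hl₁ : 0 < l₁) (hl₂ : 0 < l₂) (h₁ : 2 * l₁ ≤ o) (h₂ : 2 * l₂ ≤ o) :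
    b₁ * l₁ / o + b₂ * l₂ / o < b₁ * b₂ * k :=
  calc b₁ * l₁ / o + b₂ * l₂ / o
      < b₁ * b₂ := add_lt_mul_of_two_mul_le hb₁ hb₂
        (two_mul_mul_div_le hl₁ h₁) (two_mul_mul_div_le hl₂ h₂)
    _ ≤ b₁ * b₂ * k := Nat.le_mul_of_pos_right _ hk

end BiellipticWall

open BiellipticWall in
/-- Numerical inequality from isotropic wall-crossing on a bielliptic surface:
for `o ≥ 2`, `k ≥ 1`, `b₁, b₂ ≥ 1`, and positive divisors `l₁, l₂` of `o` with
`l₁·l₂ ∣ o·k`, one has `⌊b₁l₁/o⌋ + ⌊b₂l₂/o⌋ ≤ b₁·b₂·k`, with the listed equality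
cases (up to exchanging the pairs `(b₁,l₁)` and `(b₂,l₂)`). -/
theorem stmt_8 (o k b₁ b₂ l₁ l₂ : ℕ)
    (ho : 2 ≤ o) (hk : 1 ≤ k) (hb₁ : 1 ≤ b₁) (hb₂ : 1 ≤ b₂)
    (hl₁ : 0 < l₁) (hl₂ : 0 < l₂) (hl₁o : l₁ ∣ o) (hl₂o : l₂ ∣ o)
    (hdvd : l₁ * l₂ ∣ o * k) :
    b₁ * l₁ / o + b₂ * l₂ / o ≤ b₁ * b₂ * k ∧
    (b₁ * l₁ / o + b₂ * l₂ / o = b₁ * b₂ * k ↔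
      ((o = 2 ∧ k = 2 ∧ b₁ = 1 ∧ b₂ = 1 ∧ l₁ = 2 ∧ l₂ = 2) ∨
       (o = 2 ∧ k = 1 ∧ b₁ = 2 ∧ l₁ = 1 ∧ b₂ = 1 ∧ l₂ = 2) ∨
       (o = 2 ∧ k = 1 ∧ b₂ = 2 ∧ l₂ = 1 ∧ b₁ = 1 ∧ l₁ = 2) ∨
       (k = 1 ∧ b₁ = 1 ∧ l₁ = 1 ∧ l₂ = o) ∨
       (k = 1 ∧ b₂ = 1 ∧ l₂ = 1 ∧ l₁ = o))) := by
  have ho₀ : 0 < o := by omega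
  suffices key : b₁ * l₁ / o + b₂ * l₂ / o ≤ b₁ * b₂ * k ∧
      (b₁ * l₁ / o + b₂ * l₂ / o = b₁ * b₂ * k → IsEqualityCase o k b₁ b₂ l₁ l₂) from
    ⟨key.1, key.2, IsEqualityCase.floor_sum_eq ho⟩
  rcases eq_or_two_mul_le_of_dvd ho₀ hl₁o with h₁ | h₁ <;>
    rcases eq_or_two_mul_le_of_dvd ho₀ hl₂o with h₂ | h₂
  · exact floor_sum_of_eq_of_eq ho hk hb₁ hb₂ h₁ h₂ hdvd
  · exact floor_sum_of_eq_of_two_mul_le ho hk hb₁ hb₂ hl₂ h₁ h₂ hdvd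
  · obtain ⟨hle, heq⟩ := floor_sum_of_eq_of_two_mul_le ho hk hb₂ hb₁ hl₁ h₂ h₁
      (mul_comm l₁ l₂ ▸ hdvd)
    rw [add_comm, mul_comm b₂ b₁] at hle heq
    exact ⟨hle, fun h => (heq h).swap⟩
  · have hlt := floor_sum_lt_of_two_mul_le hk hb₁ hb₂ hl₁ hl₂ h₁ h₂
    exact ⟨hlt.le, fun h => absurd h hlt.ne⟩
end

section
/- Let H be a hyperbolic rank-two lattice and v ∈ H with v² = 2. Suppose v = a₁ + ⋯ + a_n with n ≥ 2, where each a_i ∈ H satisfies a_i² ≥ 0 and ⟨v,a_i⟩ ≥ 1. Then n = 2, ⟨v,a₁⟩ = ⟨v,a₂⟩ = 1, a₁² = a₂² = 0, and ⟨a₁,a₂⟩ = 1. -/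
set_option maxHeartbeats 1000000 in
/-- Rigidity for `v² = 2`: any decomposition `v = a₁ + ⋯ + aₙ` (`n ≥ 2`) with
`aᵢ² ≥ 0` and `⟨v,aᵢ⟩ ≥ 1` has exactly two summands, which are isotropic and satisfy
`⟨v,aᵢ⟩ = 1` and `⟨a₁,a₂⟩ = 1`. -/
theorem stmt_9 (H : Type*) [AddCommGroup H] [Module ℤ H]
    (B : H →ₗ[ℤ] H →ₗ[ℤ] ℤ) (hH : IsHyperbolicRankTwoLattice H B)
    (v : H) (hv : B v v = 2)
    (n : ℕ) (hn : 2 ≤ n) (a : Fin n → H) (hsum : v = ∑ i, a i)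
    (hsq : ∀ i, 0 ≤ B (a i) (a i)) (hpos : ∀ i, 1 ≤ B v (a i)) :
    n = 2 ∧ (∀ i, B v (a i) = 1) ∧ (∀ i, B (a i) (a i) = 0) ∧
      ∀ i j, i ≠ j → B (a i) (a j) = 1 := by
  obtain ⟨hfree, hrank, hsymm, ⟨x, hx⟩, ⟨y, hy⟩⟩ := hH
  haveI := hfree
  haveI : Module.Finite ℤ H := Module.finite_of_finrank_pos (by omega)
  -- the pairings with v sum to 2
  have htot : ∑ i, B v (a i) = 2 := by
    rw [← map_sum (B v) a Finset.univ, ← hsum, hv]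
  have hcard : (n : ℤ) ≤ 2 := by
    calc (n : ℤ) = (Finset.univ : Finset (Fin n)).card • (1 : ℤ) := by simp
    _ ≤ ∑ i, B v (a i) := Finset.card_nsmul_le_sum _ _ _ (fun i _ => hpos i)
    _ = 2 := htot
  have hn2 : n = 2 := by omega
  subst hn2
  rw [Fin.sum_univ_two] at htot hsum
  have h0 : B v (a 0) = 1 := by have := hpos 0; have := hpos 1; omega
  have h1 : B v (a 1) = 1 := by have := hpos 0; have := hpos 1; omega
  have hB0 : B (a 0) (a 0) + B (a 1) (a 0) = 1 := by
    have := h0; rw [hsum] at this; simpa [map_add] using this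
  have hB1 : B (a 0) (a 1) + B (a 1) (a 1) = 1 := by
    have := h1; rw [hsum] at this; simpa [map_add] using this
  have hsym01 : B (a 1) (a 0) = B (a 0) (a 1) := hsymm _ _
  -- the key step: a 0 is isotropic
  have hs0 : B (a 0) (a 0) = 0 := by
    by_contra hne0
    have hs1 : 1 ≤ B (a 0) (a 0) := by have := hsq 0; omega
    -- the three vectors a 0, a 1, y are linearly dependent
    have hdep : ¬ LinearIndependent ℤ ![a 0, a 1, y] := by
      intro h
      have := h.fintype_card_le_finrank
      rw [hrank] at this
      simp at this
    obtain ⟨g, hg, i0, hgi0⟩ := Fintype.not_linearIndependent_iff.mp hdep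
    rw [Fin.sum_univ_three] at hg
    simp only [Matrix.cons_val_zero, Matrix.cons_val_one, Matrix.head_cons,
      Matrix.cons_val_two, Matrix.tail_cons] at hg
    -- pair the dependence relation against a 0, a 1, y and v
    have hE0 : g 0 * B (a 0) (a 0) + g 1 * B (a 0) (a 1) + g 2 * B (a 0) y = 0 := by
      have := congrArg (B (a 0)) hg
      simpa [map_add, map_smul, smul_eq_mul] using this
    have hE1 : g 0 * B (a 1) (a 0) + g 1 * B (a 1) (a 1) + g 2 * B (a 1) y = 0 := by
      have := congrArg (B (a 1)) hg
      simpa [map_add, map_smul, smul_eq_mul] using this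
    have hEy : g 0 * B y (a 0) + g 1 * B y (a 1) + g 2 * B y y = 0 := by
      have := congrArg (B y) hg
      simpa [map_add, map_smul, smul_eq_mul] using this
    have hEv : g 0 + g 1 + g 2 * B v y = 0 := by
      have := congrArg (B v) hg
      simp only [map_add, map_smul, smul_eq_mul, map_zero, h0, h1, mul_one] at this
      linarith
    rw [hsymm y (a 0), hsymm y (a 1)] at hEy
    rw [hsym01] at hE1
    set s0 := B (a 0) (a 0) with hs0def
    set s1 := B (a 1) (a 1) with hs1def
    set c := B (a 0) (a 1) with hcdef
    set u0 := B (a 0) y with hu0def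
    set u1 := B (a 1) y with hu1def
    set t := B y y with htdef
    have hcs : c = 1 - s0 := by omega
    have hs1s : s1 = s0 := by omega
    by_cases hg2 : g 2 = 0
    · -- then a 0 and a 1 are linearly dependent; derive a contradiction
      rw [hg2] at hE0 hE1 hEv
      have hg01 : g 1 = - g 0 := by omega
      have hg0 : g 0 ≠ 0 := by
        intro h'
        have hg1 : g 1 = 0 := by omega
        fin_cases i0 <;> simp_all
      rw [hg01] at hE0 hE1
      -- hE0 : g0 * s0 - g0 * c = 0, hE1 : g0 * c - g0 * s1 = 0
      have e0 : g 0 * (s0 - c) = 0 := by ring_nf; ring_nf at hE0; linarith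
      have := mul_eq_zero.mp e0
      rcases this with h' | h'
      · exact hg0 h'
      · omega
    · -- y is rationally dependent on a 0, a 1; compute g2² · y²
      have hkey : g 2 * g 2 * t = g 0 * g 0 * s0 + 2 * (g 0 * g 1) * c + g 1 * g 1 * s1 := by
        linear_combination g 2 * hEy - g 0 * hE0 - g 1 * hE1
      rw [hcs, hs1s] at hkey
      have hg2sq : 1 ≤ g 2 * g 2 := by
        rcases lt_or_gt_of_ne hg2 with h | h <;> nlinarith
      have ht : t ≤ -1 := by omega
      have h' : g 2 * g 2 * t ≤ -1 := by
        have := mul_le_mul_of_nonneg_left ht (by positivity : (0:ℤ) ≤ g 2 * g 2)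
        nlinarith
      have hneg : s0 * (g 2 * g 2 * t) ≤ -1 := by
        have := mul_le_mul_of_nonneg_left h' (by omega : (0:ℤ) ≤ s0)
        nlinarith
      have hpos' : 0 ≤ s0 * (g 2 * g 2 * t) := by
        have expand : s0 * (g 2 * g 2 * t)
            = (s0 * g 0 + (1 - s0) * g 1) ^ 2 + (2 * s0 - 1) * g 1 ^ 2 := by
          linear_combination s0 * hkey
        rw [expand]
        have h1' : 0 ≤ (s0 * g 0 + (1 - s0) * g 1) ^ 2 := sq_nonneg _
        have h2' : 0 ≤ (2 * s0 - 1) * g 1 ^ 2 := mul_nonneg (by omega) (sq_nonneg _)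
        linarith
      omega
  have hs1 : B (a 1) (a 1) = 0 := by omega
  have hc : B (a 0) (a 1) = 1 := by omega
  refine ⟨rfl, ?_, ?_, ?_⟩
  · intro i
    match i with
    | 0 => exact h0
    | 1 => exact h1
  · intro i
    match i with
    | 0 => exact hs0
    | 1 => exact hs1
  · intro i j hij
    match i, j with
    | 0, 0 => exact absurd rfl hij
    | 0, 1 => exact hc
    | 1, 0 => rw [hsym01]; exact hc
    | 1, 1 => exact absurd rfl hij
end
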